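/- Let J : ℝⁿ → ℝ be a convex differentiable function, A an m×n real matrix, b ∈ ℝᵐ. Suppose x₊, λ₊ satisfy ∇J(x₊) + Aᵀλ₊ - ρ AᵀA(x₊ - x) + α(x₊ - x) = 0 for some x ∈ ℝⁿ, λ ∈ ℝᵐ, ρ, α > 0 with λ₊ = λ + ρ(Ax₊ - b), and x*, λ* satisfy Ax* = b and ∇J(x*) + Aᵀλ* = 0. Then (1/ρ)(λ - λ₊)ᵀ(λ₊ - λ*) + α(x - x₊)ᵀ(x₊ - x*) ≥ (x₊ - x)ᵀAᵀ(λ - λ₊). -/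

import Mathlib

open Matrix
open scoped InnerProductSpace

/-!
The gradient of a convex function is monotone, so `⟪∇J(x₊) - ∇J(x*), x₊ - x*⟫ ≥ 0`. Eliminating
both gradients with the two stationarity conditions and using `A (x₊ - x*) = (λ₊ - λ) / ρ`, which
follows from the multiplier update and `A x* = b`, turns this into the claimed inequality.
-/

section FirstOrder

variable {E : Type*} [NormedAddCommGroup E] [NormedSpace ℝ E] {s : Set E} {f : E → ℝ} {a b : E}

theorem ConvexOn.hasFDerivAt_sub_le {f' : E →L[ℝ] ℝ} (hf : ConvexOn ℝ s f) (ha : a ∈ s)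
    (hb : b ∈ s) (hf' : HasFDerivAt f f' a) : f' (b - a) ≤ f b - f a := by
  set γ : ℝ →ᵃ[ℝ] E := AffineMap.lineMap a b
  have hline : ConvexOn ℝ (γ ⁻¹' s) (f ∘ γ) := hf.comp_affineMap γ
  have hderiv : HasDerivAt (f ∘ γ) (f' (b - a)) 0 := by
    rw [← AffineMap.lineMap_apply_zero a b (k := ℝ)] at hf'
    exact hf'.comp_hasDerivAt 0 AffineMap.hasDerivAt_lineMap
  simpa [γ, slope_def_field] using
    hline.le_slope_of_hasDerivAt (by simpa [γ] using ha) (by simpa [γ] using hb) one_pos hderiv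

end FirstOrder

section Gradient

variable {F : Type*} [NormedAddCommGroup F] [InnerProductSpace ℝ F] [CompleteSpace F]
  {s : Set F} {f : F → ℝ} {a b : F}

theorem ConvexOn.inner_gradient_sub_le {g : F} (hf : ConvexOn ℝ s f) (ha : a ∈ s) (hb : b ∈ s)
    (hg : HasGradientAt f g a) : ⟪g, b - a⟫_ℝ ≤ f b - f a := by
  simpa using hf.hasFDerivAt_sub_le ha hb hg.hasFDerivAt

theorem ConvexOn.inner_gradient_sub_gradient_nonneg {ga gb : F} (hf : ConvexOn ℝ s f)
    (ha : a ∈ s) (hb : b ∈ s) (hga : HasGradientAt f ga a) (hgb : HasGradientAt f gb b) :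
    0 ≤ ⟪ga - gb, a - b⟫_ℝ := by
  have hab := hf.inner_gradient_sub_le ha hb hga
  have hba := hf.inner_gradient_sub_le hb ha hgb
  rw [← neg_sub a b, inner_neg_right] at hab
  rw [inner_sub_left]
  linarith

end Gradient

namespace Matrix

variable {l m n : Type*} [Fintype m] [DecidableEq m] [Fintype n] [DecidableEq n]

theorem inner_toEuclideanLin_transpose_left (A : Matrix m n ℝ) (v : EuclideanSpace ℝ m)
    (w : EuclideanSpace ℝ n) :
    ⟪toEuclideanLin Aᵀ v, w⟫_ℝ = ⟪v, toEuclideanLin A w⟫_ℝ := by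
  rw [← conjTranspose_eq_transpose_of_trivial, toEuclideanLin_conjTranspose_eq_adjoint,
    LinearMap.adjoint_inner_left]

theorem toEuclideanLin_mul_apply [Fintype l] [DecidableEq l] (A : Matrix l m ℝ)
    (B : Matrix m n ℝ) (v : EuclideanSpace ℝ n) :
    toEuclideanLin (A * B) v = toEuclideanLin A (toEuclideanLin B v) := by
  simp [toLpLin_apply, mulVec_mulVec]

end Matrix

theorem validity_layer_inner_product_inequality_general {m n : ℕ}
    (J : EuclideanSpace ℝ (Fin n) → ℝ) (J' : EuclideanSpace ℝ (Fin n) → EuclideanSpace ℝ (Fin n))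
    (hconv : ConvexOn ℝ Set.univ J) (hgrad : ∀ x, HasGradientAt J (J' x) x)
    (A : Matrix (Fin m) (Fin n) ℝ) (b : EuclideanSpace ℝ (Fin m))
    (ρ α : ℝ) (hρ : 0 < ρ)
    (x xp xs : EuclideanSpace ℝ (Fin n)) (l lp ls : EuclideanSpace ℝ (Fin m))
    (hopt : J' xp + Matrix.toEuclideanLin Aᵀ lp
        - ρ • Matrix.toEuclideanLin (Aᵀ * A) (xp - x) + α • (xp - x) = 0)
    (hdual : lp = l + ρ • (Matrix.toEuclideanLin A xp - b))
    (hfeas : Matrix.toEuclideanLin A xs = b)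
    (hstat : J' xs + Matrix.toEuclideanLin Aᵀ ls = 0) :
    (1 / ρ) * (inner ℝ (l - lp) (lp - ls) : ℝ) + α * (inner ℝ (x - xp) (xp - xs) : ℝ)
      ≥ (inner ℝ (xp - x) (Matrix.toEuclideanLin Aᵀ (l - lp)) : ℝ) := by
  have hmono : 0 ≤ ⟪J' xp - J' xs, xp - xs⟫_ℝ :=
    hconv.inner_gradient_sub_gradient_nonneg trivial trivial (hgrad xp) (hgrad xs)
  have hgrad_sub : J' xp - J' xs = ρ • toEuclideanLin Aᵀ (toEuclideanLin A (xp - x))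
      - α • (xp - x) - toEuclideanLin Aᵀ (lp - ls) := by
    rw [toEuclideanLin_mul_apply] at hopt
    rw [map_sub (toEuclideanLin Aᵀ)]
    linear_combination (norm := module) hopt - hstat
  have hA_sub : toEuclideanLin A (xp - xs) = ρ⁻¹ • (lp - l) := by
    rw [map_sub, hfeas, hdual, add_sub_cancel_left, inv_smul_smul₀ hρ.ne']
  have hexpand : ⟪J' xp - J' xs, xp - xs⟫_ℝ = ⟪toEuclideanLin A (xp - x), lp - l⟫_ℝ
      - α * ⟪xp - x, xp - xs⟫_ℝ - ρ⁻¹ * ⟪lp - ls, lp - l⟫_ℝ := by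
    simp only [hgrad_sub, inner_sub_left, real_inner_smul_left,
      inner_toEuclideanLin_transpose_left, hA_sub, real_inner_smul_right,
      mul_inv_cancel_left₀ hρ.ne']
    ring
  have hrhs : ⟪xp - x, toEuclideanLin Aᵀ (l - lp)⟫_ℝ = -⟪toEuclideanLin A (xp - x), lp - l⟫_ℝ := by
    rw [real_inner_comm, inner_toEuclideanLin_transpose_left, ← neg_sub lp l, inner_neg_left,
      real_inner_comm]
  rw [hrhs, ← neg_sub lp l, ← neg_sub xp x, inner_neg_left, inner_neg_left,
    real_inner_comm (lp - ls) (lp - l), one_div]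
  linarith

/-- Lemma 2 of the paper. For convex differentiable `J`, if
`∇J(x₊) + Aᵀλ₊ - ρ AᵀA(x₊ - x) + α(x₊ - x) = 0` with `λ₊ = λ + ρ(Ax₊ - b)`,
and `(x*, λ*)` is a KKT point (`Ax* = b`, `∇J(x*) + Aᵀλ* = 0`), then
`(1/ρ)(λ - λ₊)ᵀ(λ₊ - λ*) + α(x - x₊)ᵀ(x₊ - x*) ≥ (x₊ - x)ᵀAᵀ(λ - λ₊)`. -/
theorem validity_layer_inner_product_inequality {m n : ℕ}
    (J : EuclideanSpace ℝ (Fin n) → ℝ) (J' : EuclideanSpace ℝ (Fin n) → EuclideanSpace ℝ (Fin n))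
    (hconv : ConvexOn ℝ Set.univ J) (hgrad : ∀ x, HasGradientAt J (J' x) x)
    (A : Matrix (Fin m) (Fin n) ℝ) (b : EuclideanSpace ℝ (Fin m))
    (ρ α : ℝ) (hρ : 0 < ρ) (hα : 0 < α)
    (x xp xs : EuclideanSpace ℝ (Fin n)) (l lp ls : EuclideanSpace ℝ (Fin m))
    (hopt : J' xp + Matrix.toEuclideanLin Aᵀ lp
        - ρ • Matrix.toEuclideanLin (Aᵀ * A) (xp - x) + α • (xp - x) = 0)
    (hdual : lp = l + ρ • (Matrix.toEuclideanLin A xp - b))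
    (hfeas : Matrix.toEuclideanLin A xs = b)
    (hstat : J' xs + Matrix.toEuclideanLin Aᵀ ls = 0) :
    (1 / ρ) * (inner ℝ (l - lp) (lp - ls) : ℝ) + α * (inner ℝ (x - xp) (xp - xs) : ℝ)
      ≥ (inner ℝ (xp - x) (Matrix.toEuclideanLin Aᵀ (l - lp)) : ℝ) :=
  validity_layer_inner_product_inequality_general J J' hconv hgrad A b ρ α hρ x xp xs l lp ls hopt
    hdual hfeas hstat
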